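/- Let π be a matrix with π² = π, π π* = π* π = 0 (adjoint with respect to s = diag(-I_p,I_q)), and let π̃ satisfy π̃² = π̃, π π̃ = π̃, π̃ π = π, π* π̃ = 0. Set N := π - π̃ and suppose N π̃* = N and N π = 0 hold (as follow when π, π̃ are the projections of the basic construction). Then for α ∈ ℝ and β ∈ ℂ, (I + ((α-β)/(λ-α))π + ((β̄-α)/(λ-β̄))π*) · (I + ((β-α)/(λ-β))π̃ + ((α-β̄)/(λ-α))π̃*) = I + ((2α-β-β̄)/(λ-α))N + (|α-β|²/(λ-α)²)N, provided π - π̃ = π π̃* = N and π̃* - π* = -N*= N. -/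

import Mathlib

open Matrix

/-- The matrix `s = diag(-I_p, I_q)` defining the signature-`(p,q)` Hermitian form on `ℂⁿ`. -/
noncomputable def sig (p n : ℕ) : Matrix (Fin n) (Fin n) ℂ :=
  Matrix.diagonal fun i => if (i : ℕ) < p then -1 else 1

/-- The Hermitian form `⟨v,w⟩ = -∑_{i<p} v̄ᵢwᵢ + ∑_{i≥p} v̄ᵢwᵢ = v̄ᵗ s w`. -/
noncomputable def pqform (p n : ℕ) (v w : Fin n → ℂ) : ℂ :=
  star v ⬝ᵥ (sig p n *ᵥ w)

/-- The adjoint `A* = s Āᵗ s` with respect to the signature-`(p,q)` form. -/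
noncomputable def pqadj (p n : ℕ) (A : Matrix (Fin n) (Fin n) ℂ) : Matrix (Fin n) (Fin n) ℂ :=
  sig p n * Aᴴ * sig p n

/-!
Substituting `π̃ = π - N` and `π̃* = π* + N`, the relations among `π`, `π*` and `N` collapse the
product of the two factors to `1 + (a + c + ac) π + (b + d + bd) π* + (1 + a)(d - c) N`, where
`a, b, c, d` are the four scalar coefficients. Each factor `1 + (x - y)/(λ - x)` equals
`(λ - y)/(λ - x)`, so the coefficients of `π` and `π*` vanish and only the multiple of `N` survives.
-/

theorem sig_mul_sig (p n : ℕ) : sig p n * sig p n = 1 := by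
  rw [sig, diagonal_mul_diagonal, ← diagonal_one]
  congr 1
  ext i
  split_ifs <;> norm_num

theorem pqadj_mul (p n : ℕ) (A B : Matrix (Fin n) (Fin n) ℂ) :
    pqadj p n (A * B) = pqadj p n B * pqadj p n A := by
  calc pqadj p n (A * B) = sig p n * Bᴴ * 1 * Aᴴ * sig p n := by
        simp only [pqadj, conjTranspose_mul, mul_one, Matrix.mul_assoc]
    _ = pqadj p n B * pqadj p n A := by
        simp only [pqadj, ← sig_mul_sig p n, Matrix.mul_assoc]

theorem IsIdempotentElem.pqadj {p n : ℕ} {A : Matrix (Fin n) (Fin n) ℂ}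
    (hA : IsIdempotentElem A) : IsIdempotentElem (pqadj p n A) := by
  rw [IsIdempotentElem, ← pqadj_mul, hA.eq]

theorem factor_mul_factor {R : Type*} [Ring R] [Algebra ℂ R] {π A N : R}
    (hπ : IsIdempotentElem π) (hA : IsIdempotentElem A) (hπA : π * A = 0) (hAπ : A * π = 0)
    (hπN : π * N = N) (hAN : A * N = 0) (a b c d : ℂ) :
    (1 + a • π + b • A) * (1 + c • (π - N) + d • (A + N)) =
      1 + (a + c + a * c) • π + (b + d + b * d) • A + ((1 + a) * (d - c)) • N := by
  simp only [mul_add, add_mul, one_mul, mul_one, smul_mul_assoc, mul_smul_comm, mul_sub,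
    smul_sub, hπ.eq, hA.eq, hπA, hAπ, hπN, hAN, smul_zero, add_zero]
  match_scalars <;> ring

theorem div_add_div_add_mul_eq_zero {K : Type*} [Field K] {x y lam : K}
    (hx : lam ≠ x) (hy : lam ≠ y) :
    (x - y) / (lam - x) + (y - x) / (lam - y) + (x - y) / (lam - x) * ((y - x) / (lam - y)) =
      0 := by
  field_simp [sub_ne_zero.mpr hx, sub_ne_zero.mpr hy]
  ring

theorem stmt_12_general (p n : ℕ)
    (π πt N : Matrix (Fin n) (Fin n) ℂ)
    (hπ2 : π * π = π)
    (hππs : π * pqadj p n π = 0) (hπsπ : pqadj p n π * π = 0)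
    (hππt : π * πt = πt)
    (hπsπt : pqadj p n π * πt = 0)
    (hNdef : N = π - πt)
    (hstar : pqadj p n πt - pqadj p n π = N)
    (α : ℝ) (β lam : ℂ)
    (h1 : lam ≠ (α : ℂ)) (h2 : lam ≠ β) (h3 : lam ≠ (starRingEnd ℂ) β) :
    (1 + (((α : ℂ) - β) / (lam - (α : ℂ))) • π +
        (((starRingEnd ℂ) β - (α : ℂ)) / (lam - (starRingEnd ℂ) β)) • pqadj p n π) *
      (1 + ((β - (α : ℂ)) / (lam - β)) • πt +
        (((α : ℂ) - (starRingEnd ℂ) β) / (lam - (α : ℂ))) • pqadj p n πt) =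
      1 + ((2 * (α : ℂ) - β - (starRingEnd ℂ) β) / (lam - (α : ℂ))) • N +
        (((Complex.normSq ((α : ℂ) - β) : ℝ) : ℂ) / (lam - (α : ℂ)) ^ 2) • N := by
  have hπ : IsIdempotentElem π := hπ2
  have hπN : π * N = N := by rw [hNdef, mul_sub, hπ2, hππt]
  have hπsN : pqadj p n π * N = 0 := by rw [hNdef, mul_sub, hπsπ, hπsπt, sub_zero]
  have hπt : πt = π - N := by rw [hNdef, sub_sub_cancel]
  have hπts : pqadj p n πt = pqadj p n π + N := by rw [← hstar, add_sub_cancel]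
  have hnormSq : ((Complex.normSq ((α : ℂ) - β) : ℝ) : ℂ) =
      ((α : ℂ) - β) * ((α : ℂ) - (starRingEnd ℂ) β) := by
    rw [← Complex.mul_conj, map_sub, Complex.conj_ofReal]
  rw [hπts, hπt, factor_mul_factor hπ hπ.pqadj hππs hπsπ hπN hπsN,
    div_add_div_add_mul_eq_zero h1 h2, div_add_div_add_mul_eq_zero h3 h1, zero_smul, zero_smul,
    add_zero, add_zero, add_assoc, ← add_smul, hnormSq]
  congr 2
  field_simp
  ring

theorem stmt_12 (p q n : ℕ) (hn : n = p + q)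
    (π πt N : Matrix (Fin n) (Fin n) ℂ)
    (hπ2 : π * π = π)
    (hππs : π * pqadj p n π = 0) (hπsπ : pqadj p n π * π = 0)
    (hπt2 : πt * πt = πt)
    (hππt : π * πt = πt) (hπtπ : πt * π = π)
    (hπsπt : pqadj p n π * πt = 0)
    (hNdef : N = π - πt)
    (hNπts : N * pqadj p n πt = N) (hNπ : N * π = 0)
    (hππts : π * pqadj p n πt = N)
    (hstar : pqadj p n πt - pqadj p n π = N)
    (hNas : pqadj p n N = -N)
    (α : ℝ) (β lam : ℂ)
    (h1 : lam ≠ (α : ℂ)) (h2 : lam ≠ β) (h3 : lam ≠ (starRingEnd ℂ) β) :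
    (1 + (((α : ℂ) - β) / (lam - (α : ℂ))) • π +
        (((starRingEnd ℂ) β - (α : ℂ)) / (lam - (starRingEnd ℂ) β)) • pqadj p n π) *
      (1 + ((β - (α : ℂ)) / (lam - β)) • πt +
        (((α : ℂ) - (starRingEnd ℂ) β) / (lam - (α : ℂ))) • pqadj p n πt) =
      1 + ((2 * (α : ℂ) - β - (starRingEnd ℂ) β) / (lam - (α : ℂ))) • N +
        (((Complex.normSq ((α : ℂ) - β) : ℝ) : ℂ) / (lam - (α : ℂ)) ^ 2) • N :=
  stmt_12_general p n π πt N hπ2 hππs hπsπ hππt hπsπt hNdef hstar α β lam h1 h2 h3
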